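/- arXiv:2101.08643 — 2 statements merged into one kernel-verified Lean document; each statement's English description precedes it below -/
import Mathlib

section
/- The function s₀(t) = I₀(t)/(t I₁(t)) is differentiable on (0,∞) with s₀'(t) = (1/t)(1 − I₀(t)²/I₁(t)²), and s₀'(t) < 0 for all t > 0; in particular s₀ is strictly decreasing on (0,∞). (This uses that I₁(t) < I₀(t) for all t > 0.) -/
open MeasureTheory ProbabilityTheory Real Filter Set

noncomputable section

/-- The noncentral chi-squared density with `k` degrees of freedom and
noncentrality parameter `ξ`, as a series (valid for `y > 0`). -/
def ncChiSqPDF (k : ℕ) (ξ : ℝ) (y : ℝ) : ℝ :=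
  ∑' j : ℕ, (Real.exp (-ξ/2) * (ξ/2)^j / (Nat.factorial j)) *
    (y ^ ((k:ℝ)/2 + j - 1) * Real.exp (-y/2) /
      ((2:ℝ) ^ ((k:ℝ)/2 + (j:ℝ)) * Real.Gamma ((k:ℝ)/2 + j)))

/-- The cumulative distribution function of the noncentral chi-squared distribution. -/
def ncChiSqCDF (k : ℕ) (ξ : ℝ) (y : ℝ) : ℝ :=
  ∫ t in (0:ℝ)..y, ncChiSqPDF k ξ t

/-- The modified Bessel function of the first kind. -/
def besselI (ν : ℝ) (z : ℝ) : ℝ :=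
  ∑' k : ℕ, (z/2) ^ (2*(k:ℝ) + ν) / (Nat.factorial k * Real.Gamma ((k:ℝ) + ν + 1))

/-- The information density with respect to the amplitude of the input, where `F` is the
law of the input amplitude `|X|` (a probability measure on `[0, A]`). -/
def infoDensity (N : ℕ) (F : Measure ℝ) (ρ : ℝ) : ℝ :=
  (∫ y in Set.Ioi (0:ℝ), ncChiSqPDF (2*N) (ρ^2) y *
      Real.log (y ^ ((N:ℝ) - 1) / ∫ t, ncChiSqPDF (2*N) (t^2) y ∂F))
    - Real.log ((2 * Real.exp 1)^N * Real.Gamma N)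

/-- The standard proper complex Gaussian with mean 0 and variance 2
(real and imaginary parts i.i.d. standard normal). -/
def stdComplexGaussian : Measure ℂ :=
  Measure.map (fun p : ℝ × ℝ => p.1 + p.2 * Complex.I)
    ((gaussianReal 0 1).prod (gaussianReal 0 1))

/-- The law of the noise vector `W` in `ℂ^N`: `N` i.i.d. proper complex Gaussian components. -/
def noiseLaw (N : ℕ) : Measure (Fin N → ℂ) := Measure.pi fun _ => stdComplexGaussian

open Classical in
/-- Kullback-Leibler divergence (natural logarithm), valued in extended reals. -/
def klDivE {α : Type*} [MeasurableSpace α] (μ ν : Measure α) : EReal :=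
  if μ ≪ ν ∧ Integrable (MeasureTheory.llr μ ν) μ
  then ((∫ x, MeasureTheory.llr μ ν x ∂μ : ℝ) : EReal) else ⊤

/-- Mutual information of two random variables, as the KL divergence between the joint law
and the product of the marginals. -/
def mutualInfoE {Ω α β : Type*} [MeasurableSpace Ω] [MeasurableSpace α] [MeasurableSpace β]
    (P : Measure Ω) (X : Ω → α) (Y : Ω → β) : EReal :=
  klDivE (Measure.map (fun ω => (X ω, Y ω)) P) ((Measure.map X P).prod (Measure.map Y P))

/-- Euclidean norm on `ℂ^N`. -/
def eucNorm {N : ℕ} (x : Fin N → ℂ) : ℝ := Real.sqrt (∑ i, ‖x i‖ ^ 2)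

/-- Mutual information between input and output of the channel `Y = X + W`,
for an input law `μ` on `ℂ^N`. -/
def channelMI (N : ℕ) (μ : Measure (Fin N → ℂ)) : EReal :=
  klDivE
    (Measure.map (fun p : (Fin N → ℂ) × (Fin N → ℂ) => (p.1, p.1 + p.2)) (μ.prod (noiseLaw N)))
    (μ.prod (Measure.map (fun p : (Fin N → ℂ) × (Fin N → ℂ) => p.1 + p.2) (μ.prod (noiseLaw N))))

/-- Capacity of the amplitude-constrained vector Gaussian channel. -/
def capacity (N : ℕ) (A : ℝ) : EReal :=
  ⨆ μ ∈ {μ : Measure (Fin N → ℂ) | IsProbabilityMeasure μ ∧ μ {x | eucNorm x ≤ A} = 1},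
    channelMI N μ

/-! Differentiating the series termwise gives `I₀' = I₁` and `(t I₁)' = t I₀`. Hence
`(t I₀)² - (t I₁)²` vanishes at `0` and has derivative `2 t I₀² > 0`, so `I₁ < I₀` on `(0, ∞)`,
and the quotient rule gives `s₀' = (I₁² - I₀²) / (t I₁²) < 0`. -/

open scoped Nat

section TermwiseDerivative

variable {c : ℕ → ℝ} {C a : ℝ}

lemma abs_mul_pow_le (hc : ∀ k, |c k| ≤ C * a ^ k / k !) (n k : ℕ) {x R : ℝ} (hxR : |x| ≤ R) :
    |c k * x ^ (2 * k + n)| ≤ C * R ^ n * (a * R ^ 2) ^ k / k ! := by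
  calc |c k * x ^ (2 * k + n)| = |c k| * |x| ^ (2 * k + n) := by rw [abs_mul, abs_pow]
    _ ≤ C * a ^ k / k ! * R ^ (2 * k + n) :=
        mul_le_mul (hc k) (pow_le_pow_left₀ (abs_nonneg x) hxR _) (by positivity)
          ((abs_nonneg _).trans (hc k))
    _ = C * R ^ n * (a * R ^ 2) ^ k / k ! := by ring

lemma summable_mul_pow (hc : ∀ k, |c k| ≤ C * a ^ k / k !) (n : ℕ) (x : ℝ) :
    Summable fun k => c k * x ^ (2 * k + n) :=
  .of_norm_bounded ((Real.summable_pow_div_factorial (a * |x| ^ 2)).mul_left (C * |x| ^ n))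
    fun k => by simpa only [Real.norm_eq_abs, mul_div_assoc] using abs_mul_pow_le hc n k le_rfl

lemma abs_mul_exponent_le (hc : ∀ k, |c k| ≤ C * a ^ k / k !) (n k : ℕ) :
    |c k * (2 * k + n + 1 : ℕ)| ≤ 2 ^ (n + 1) * C * (4 * a) ^ k / k ! := by
  have hexp : ((2 * k + n + 1 : ℕ) : ℝ) ≤ 2 ^ (2 * k + n + 1) := by
    exact_mod_cast Nat.lt_two_pow_self.le
  calc |c k * (2 * k + n + 1 : ℕ)| = |c k| * (2 * k + n + 1 : ℕ) := by rw [abs_mul, Nat.abs_cast]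
    _ ≤ C * a ^ k / k ! * 2 ^ (2 * k + n + 1) :=
        mul_le_mul (hc k) hexp (by positivity) ((abs_nonneg _).trans (hc k))
    _ = 2 ^ (n + 1) * C * (4 * a) ^ k / k ! := by
        rw [show (4 : ℝ) = 2 ^ 2 by norm_num, mul_pow, ← pow_mul]; ring

theorem hasDerivAt_tsum_mul_pow (hc : ∀ k, |c k| ≤ C * a ^ k / k !) (n : ℕ) (x : ℝ) :
    HasDerivAt (fun y => ∑' k, c k * y ^ (2 * k + n + 1))
      (∑' k, c k * (2 * k + n + 1 : ℕ) * x ^ (2 * k + n)) x := by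
  set R := |x| + 1
  have hx : x ∈ Metric.ball (0 : ℝ) R := by simp [R]
  refine hasDerivAt_tsum_of_isPreconnected (g := fun k y => c k * y ^ (2 * k + n + 1))
    (g' := fun k y => c k * (2 * k + n + 1 : ℕ) * y ^ (2 * k + n))
    ((Real.summable_pow_div_factorial (4 * a * R ^ 2)).mul_left (2 ^ (n + 1) * C * R ^ n))
    Metric.isOpen_ball (convex_ball 0 R).isPreconnected (fun k y _ => ?_) (fun k y hy => ?_)
    hx (summable_mul_pow hc (n + 1) x) hx
  · simpa [mul_assoc] using (hasDerivAt_pow (2 * k + n + 1) y).const_mul (c k)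
  · have hyR : |y| ≤ R := by simpa using (Metric.mem_ball.1 hy).le
    simpa only [Real.norm_eq_abs, mul_div_assoc] using
      abs_mul_pow_le (abs_mul_exponent_le hc n) n k hyR

end TermwiseDerivative

lemma besselI_zero_eq_tsum (z : ℝ) :
    besselI 0 z = ∑' k : ℕ, ((k ! * k ! : ℝ))⁻¹ * (z / 2) ^ (2 * k) := by
  refine tsum_congr fun k => ?_
  simp only [add_zero]
  rw [show (2 * k : ℝ) = (2 * k : ℕ) by push_cast; ring, Real.rpow_natCast,
    Real.Gamma_nat_eq_factorial, div_eq_inv_mul]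

lemma besselI_one_eq_tsum (z : ℝ) :
    besselI 1 z = ∑' k : ℕ, ((k ! * (k + 1) ! : ℝ))⁻¹ * (z / 2) ^ (2 * k + 1) := by
  refine tsum_congr fun k => ?_
  rw [show (2 * k + 1 : ℝ) = (2 * k + 1 : ℕ) by push_cast; ring, Real.rpow_natCast,
    show (k + 1 + 1 : ℝ) = (k + 1 : ℕ) + 1 by push_cast; ring, Real.Gamma_nat_eq_factorial,
    div_eq_inv_mul]

lemma abs_inv_factorial_mul_le {k j : ℕ} (m : ℕ) (hkj : k ≤ j) :
    |((j ! * m ! : ℝ))⁻¹| ≤ 1 * 1 ^ k / k ! := by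
  rw [one_pow, one_mul, one_div, abs_of_pos (by positivity)]
  refine inv_anti₀ (by positivity) ?_
  exact_mod_cast (Nat.factorial_le hkj).trans (Nat.le_mul_of_pos_right _ m.factorial_pos)

theorem hasDerivAt_besselI_zero (z : ℝ) : HasDerivAt (besselI 0) (besselI 1 z) z := by
  have hsplit : besselI 0 = fun s =>
      1 + ∑' k : ℕ, (((k + 1) ! * (k + 1) ! : ℝ))⁻¹ * (s / 2) ^ (2 * k + 1 + 1) := by
    funext s
    have hs : Summable fun k : ℕ => ((k ! * k ! : ℝ))⁻¹ * (s / 2) ^ (2 * k) :=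
      summable_mul_pow (fun k => abs_inv_factorial_mul_le k le_rfl) 0 (s / 2)
    rw [besselI_zero_eq_tsum, hs.tsum_eq_zero_add]
    simp [mul_add]
  have h := ((hasDerivAt_tsum_mul_pow (fun k => abs_inv_factorial_mul_le (k + 1) k.le_succ) 1
    (z / 2)).comp z ((hasDerivAt_id z).div_const 2)).const_add 1
  rw [hsplit]
  refine h.congr_deriv ?_
  rw [besselI_one_eq_tsum, ← tsum_mul_right]
  refine tsum_congr fun k => ?_
  push_cast [Nat.factorial_succ]
  field_simp
  ring

theorem hasDerivAt_mul_besselI_one (z : ℝ) :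
    HasDerivAt (fun s => s * besselI 1 s) (z * besselI 0 z) z := by
  have hfun : (fun s => s * besselI 1 s) = fun s =>
      2 * ∑' k : ℕ, ((k ! * (k + 1) ! : ℝ))⁻¹ * (s / 2) ^ (2 * k + 1 + 1) := by
    funext s
    rw [besselI_one_eq_tsum, ← tsum_mul_left, ← tsum_mul_left]
    refine tsum_congr fun k => ?_
    ring
  have h := ((hasDerivAt_tsum_mul_pow (fun k => abs_inv_factorial_mul_le (k + 1) le_rfl) 1
    (z / 2)).comp z ((hasDerivAt_id z).div_const 2)).const_mul 2
  rw [hfun]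
  refine h.congr_deriv ?_
  rw [besselI_zero_eq_tsum, ← tsum_mul_left, ← tsum_mul_right, ← tsum_mul_left]
  refine tsum_congr fun k => ?_
  push_cast [Nat.factorial_succ]
  field_simp
  ring

lemma besselI_zero_pos (z : ℝ) : 0 < besselI 0 z := by
  rw [besselI_zero_eq_tsum]
  refine (summable_mul_pow (fun k => abs_inv_factorial_mul_le k le_rfl) 0 (z / 2)).tsum_pos
    (fun k => ?_) 0 (by simp)
  rw [add_zero, pow_mul]
  positivity

lemma besselI_one_pos {z : ℝ} (hz : 0 < z) : 0 < besselI 1 z := by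
  rw [besselI_one_eq_tsum]
  exact (summable_mul_pow (fun k => abs_inv_factorial_mul_le (k + 1) le_rfl) 1 (z / 2)).tsum_pos
    (fun k => by positivity) 0 (by positivity)

theorem besselI_one_lt_besselI_zero {z : ℝ} (hz : 0 < z) : besselI 1 z < besselI 0 z := by
  set q : ℝ → ℝ := fun s => (s * besselI 0 s) ^ 2 - (s * besselI 1 s) ^ 2
  have hq : ∀ s, HasDerivAt q (2 * s * besselI 0 s ^ 2) s := fun s => by
    refine ((((hasDerivAt_id s).mul (hasDerivAt_besselI_zero s)).pow 2).sub
      ((hasDerivAt_mul_besselI_one s).pow 2)).congr_deriv ?_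
    simp only [Pi.mul_apply, id, Nat.cast_ofNat]
    ring
  have hmono : StrictMonoOn q (Ici 0) :=
    strictMonoOn_of_hasDerivWithinAt_pos (convex_Ici 0)
      (fun s _ => (hq s).continuousAt.continuousWithinAt) (fun s _ => (hq s).hasDerivWithinAt)
      fun s hs => by
        rw [interior_Ici] at hs
        exact mul_pos (mul_pos two_pos hs) (pow_pos (besselI_zero_pos s) 2)
  have hq0 : q 0 < q z := hmono self_mem_Ici hz.le hz
  simp only [q, zero_mul, sub_self, sub_pos] at hq0
  have := besselI_zero_pos z
  exact lt_of_mul_lt_mul_left (lt_of_pow_lt_pow_left₀ 2 (by positivity) hq0) hz.le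

theorem hasDerivAt_besselI_zero_div_mul_besselI_one {t : ℝ} (ht : 0 < t) :
    HasDerivAt (fun s => besselI 0 s / (s * besselI 1 s))
      ((1 / t) * (1 - besselI 0 t ^ 2 / besselI 1 t ^ 2)) t := by
  have hI₁ := besselI_one_pos ht
  refine ((hasDerivAt_besselI_zero t).div (hasDerivAt_mul_besselI_one t)
    (by positivity)).congr_deriv ?_
  field_simp

lemma one_div_mul_one_sub_besselI_sq_div_neg {t : ℝ} (ht : 0 < t) :
    (1 / t) * (1 - besselI 0 t ^ 2 / besselI 1 t ^ 2) < 0 := by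
  have hI₁ := besselI_one_pos ht
  have hsq : 1 < besselI 0 t ^ 2 / besselI 1 t ^ 2 :=
    (one_lt_div (by positivity)).2
      (pow_lt_pow_left₀ (besselI_one_lt_besselI_zero ht) hI₁.le two_ne_zero)
  exact mul_neg_of_pos_of_neg (by positivity) (by linarith)

/-- The function `s₀(t) = I₀(t)/(t I₁(t))` is differentiable on `(0, ∞)`
with derivative `(1/t)(1 − I₀(t)²/I₁(t)²) < 0`; in particular it is strictly decreasing. -/
theorem stmt8 :
    (∀ t : ℝ, 0 < t →
      HasDerivAt (fun s : ℝ => besselI 0 s / (s * besselI 1 s))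
        ((1/t) * (1 - (besselI 0 t)^2 / (besselI 1 t)^2)) t ∧
      (1/t) * (1 - (besselI 0 t)^2 / (besselI 1 t)^2) < 0) ∧
    StrictAntiOn (fun s : ℝ => besselI 0 s / (s * besselI 1 s)) (Set.Ioi 0) := by
  have hderiv := fun t (ht : 0 < t) =>
    And.intro (hasDerivAt_besselI_zero_div_mul_besselI_one ht)
      (one_div_mul_one_sub_besselI_sq_div_neg ht)
  refine ⟨hderiv, strictAntiOn_of_deriv_neg (convex_Ioi 0)
    (fun t ht => (hderiv t ht).1.continuousAt.continuousWithinAt) fun t ht => ?_⟩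
  rw [interior_Ioi] at ht
  rw [(hderiv t ht).1.deriv]
  exact (hderiv t ht).2

end
end

section
/- For every integer N ≥ 1, every ρ > 0 and every y > 0, lim_{h → 0} ( F_{χ²_{2N}(ρ²)}(y) − F_{χ²_{2N}((ρ+h)²)}(y) ) / ( h(2ρ + h) ) = f_{χ²_{2(N+1)}(ρ²)}(y); that is, the auxiliary density f_Q(y; ρ+h, ρ) = (F_{χ²_{2N}(ρ²)}(y) − F_{χ²_{2N}((ρ+h)²)}(y)) / ((ρ+h)² − ρ²) converges pointwise as h → 0 to the noncentral chi-squared density with 2(N+1) degrees of freedom and noncentrality ρ². -/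
open MeasureTheory ProbabilityTheory Real Filter Set

noncomputable section

/-!
Write `N = m + 1`. The noncentral χ² law with `2N` degrees of freedom and noncentrality `ξ` is
the mixture, with Poisson weights `w_j` of rate `ξ / 2`, of the central χ² laws with
`2(m + j + 1)` degrees of freedom, so its CDF is `∑ w_j C_{m+j}` with `C_k` the central CDFs.
Since `w_j' = w_{j-1} - w_j`, differentiating termwise in the rate turns this into
`∑ w_j (C_{m+j+1} - C_{m+j})`, and integration by parts gives `C_k - C_{k+1} = 2 f_{k+1}`, with
`f_k` the central density. Hence the noncentral CDF and density satisfy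
`∂_ξ F_{2N}(ξ, y) = -f_{2N+2}(ξ, y)`, and the limit is this derivative at `ξ = ρ²` read through `h ↦ (ρ + h)²`, whose derivative at `0` is `2ρ`.
-/

open scoped Nat Topology

-- Mathlib's `poissonPMFReal` takes its rate in `ℝ≥0`, which is awkward to differentiate in.
def poissonWeight (r : ℝ) (j : ℕ) : ℝ := exp (-r) * r ^ j / j !

lemma summable_poissonWeight (r : ℝ) : Summable (poissonWeight r) :=
  ((Real.summable_pow_div_factorial r).mul_left (exp (-r))).congr fun j => by
    simp only [poissonWeight, mul_div_assoc]

lemma summable_poissonWeight_mul {c : ℕ → ℝ} {K : ℝ} (hc : ∀ j, |c j| ≤ K) (r : ℝ) :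
    Summable fun j => poissonWeight r j * c j :=
  .of_norm_bounded ((summable_poissonWeight r).abs.mul_right K) fun j => by
    rw [Real.norm_eq_abs, abs_mul]
    exact mul_le_mul_of_nonneg_left (hc j) (abs_nonneg _)

lemma natCast_succ_mul_div_factorial_succ (x : ℝ) (j : ℕ) :
    ((j + 1 : ℕ) : ℝ) * x / (j + 1)! = x / j ! := by
  rw [Nat.factorial_succ, Nat.cast_mul]
  field_simp

lemma summable_natCast_mul_pow_pred_div_factorial (R : ℝ) :
    Summable fun j : ℕ => (j : ℝ) * R ^ (j - 1) / j ! :=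
  (summable_nat_add_iff 1).mp <| (Real.summable_pow_div_factorial R).congr fun j => by
    rw [Nat.add_sub_cancel, natCast_succ_mul_div_factorial_succ]

lemma abs_exp_neg_mul_pow_le {s R : ℝ} (hs : |s| ≤ R) (k : ℕ) :
    |exp (-s) * s ^ k| ≤ exp R * R ^ k := by
  rw [abs_mul, abs_exp, abs_pow]
  gcongr
  linarith [neg_le_abs s]

lemma hasDerivAt_poissonWeight (r : ℝ) (j : ℕ) :
    HasDerivAt (poissonWeight · j)
      (j * (exp (-r) * r ^ (j - 1)) / (j ! : ℝ) - poissonWeight r j) r := by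
  have h := (((hasDerivAt_neg r).exp).mul (hasDerivAt_pow j r)).div_const (j ! : ℝ)
  exact h.congr_deriv (by simp only [poissonWeight]; ring)

/-- The `j = 0` term vanishes and the others are the Poisson weights shifted by one. -/
lemma hasSum_natCast_mul_exp_neg_mul_pow_pred {c : ℕ → ℝ} {K : ℝ} (hc : ∀ j, |c j| ≤ K) (r : ℝ) :
    HasSum (fun j : ℕ => j * (exp (-r) * r ^ (j - 1)) / j ! * c j)
      (∑' j, poissonWeight r j * c (j + 1)) := by
  have h := (summable_poissonWeight_mul (c := (c <| · + 1)) (fun j => hc _) r).hasSum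
  have h' := (hasSum_nat_add_iff 1
    (f := fun j : ℕ => j * (exp (-r) * r ^ (j - 1)) / j ! * c j)).mp (h.congr_fun fun j => by
      rw [Nat.add_sub_cancel, natCast_succ_mul_div_factorial_succ, poissonWeight])
  simpa using h'

theorem hasDerivAt_tsum_poissonWeight_mul {c : ℕ → ℝ} {K : ℝ} (hc : ∀ j, |c j| ≤ K) (r : ℝ) :
    HasDerivAt (fun s => ∑' j, poissonWeight s j * c j)
      (∑' j, poissonWeight r j * (c (j + 1) - c j)) r := by
  set R := |r| + 1
  have hr : r ∈ Ioo (-R) R := abs_lt.mp (lt_add_one _)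
  have hbound : ∀ j s, s ∈ Ioo (-R) R →
      ‖(j * (exp (-s) * s ^ (j - 1)) / (j ! : ℝ) - poissonWeight s j) * c j‖
        ≤ exp R * (j * R ^ (j - 1) / j ! + R ^ j / j !) * K := by
    intro j s hs
    have hsR : |s| ≤ R := (abs_lt.mpr hs).le
    rw [Real.norm_eq_abs, abs_mul]
    gcongr ?_ * ?_
    · calc _ ≤ |j * (exp (-s) * s ^ (j - 1)) / j !| + |poissonWeight s j| := abs_sub _ _
        _ ≤ j * (exp R * R ^ (j - 1)) / j ! + exp R * R ^ j / j ! := by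
          rw [poissonWeight, abs_div, abs_div, abs_mul, Nat.abs_cast, Nat.abs_cast]
          gcongr <;> exact abs_exp_neg_mul_pow_le hsR _
        _ = _ := by ring
    · exact hc j
  have hderiv := hasDerivAt_tsum_of_isPreconnected (t := Ioo (-R) R)
    (((summable_natCast_mul_pow_pred_div_factorial R).add
      (Real.summable_pow_div_factorial R)).mul_left (exp R) |>.mul_right K)
    isOpen_Ioo isPreconnected_Ioo (fun j s _ => (hasDerivAt_poissonWeight s j).mul_const (c j))
    hbound hr (summable_poissonWeight_mul hc r) hr
  refine hderiv.congr_deriv ?_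
  have hshift := hasSum_natCast_mul_exp_neg_mul_pow_pred hc r
  have hc' := summable_poissonWeight_mul (c := (c <| · + 1)) (fun j => hc _) r
  simp only [sub_mul, mul_sub]
  rw [hshift.summable.tsum_sub (summable_poissonWeight_mul hc r),
    hc'.tsum_sub (summable_poissonWeight_mul hc r), hshift.tsum_eq]

/-- The density of the central χ² law with `2 * (m + 1)` degrees of freedom. -/
def chiSqPDF (m : ℕ) (t : ℝ) : ℝ := t ^ m * exp (-t / 2) / (2 ^ (m + 1) * m !)

def chiSqCDF (m : ℕ) (y : ℝ) : ℝ := ∫ t in (0 : ℝ)..y, chiSqPDF m t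

lemma chiSqPDF_nonneg (m : ℕ) {t : ℝ} (ht : 0 ≤ t) : 0 ≤ chiSqPDF m t := by
  unfold chiSqPDF; positivity

lemma continuous_chiSqPDF (m : ℕ) : Continuous (chiSqPDF m) := by
  unfold chiSqPDF; fun_prop

lemma hasDerivAt_two_mul_chiSqPDF_succ (m : ℕ) (t : ℝ) :
    HasDerivAt (fun t => 2 * chiSqPDF (m + 1) t) (chiSqPDF m t - chiSqPDF (m + 1) t) t := by
  have h := ((((hasDerivAt_pow (m + 1) t).mul ((hasDerivAt_neg t).div_const 2).exp)).div_const
    (2 ^ (m + 1 + 1) * (m + 1)! : ℝ)).const_mul 2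
  refine h.congr_deriv ?_
  simp only [chiSqPDF, Nat.factorial_succ, Nat.cast_mul, Nat.add_sub_cancel]
  field_simp
  ring

lemma chiSqCDF_sub_chiSqCDF_succ (m : ℕ) (y : ℝ) :
    chiSqCDF m y - chiSqCDF (m + 1) y = 2 * chiSqPDF (m + 1) y := by
  have hint (k : ℕ) := (continuous_chiSqPDF k).intervalIntegrable (μ := volume) 0 y
  rw [chiSqCDF, chiSqCDF, ← intervalIntegral.integral_sub (hint m) (hint (m + 1)),
    intervalIntegral.integral_eq_sub_of_hasDerivAt
      (fun t _ => hasDerivAt_two_mul_chiSqPDF_succ m t) ((hint m).sub (hint (m + 1)))]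
  simp [chiSqPDF]

lemma chiSqCDF_nonneg (m : ℕ) {y : ℝ} (hy : 0 ≤ y) : 0 ≤ chiSqCDF m y :=
  intervalIntegral.integral_nonneg hy fun _ ht => chiSqPDF_nonneg m ht.1

lemma abs_chiSqCDF_le (m : ℕ) {y : ℝ} (hy : 0 ≤ y) : |chiSqCDF m y| ≤ chiSqCDF 0 y := by
  have hanti : Antitone (chiSqCDF · y) := antitone_nat_of_succ_le fun k => by
    linarith [chiSqCDF_sub_chiSqCDF_succ k y, chiSqPDF_nonneg (k + 1) hy]
  rw [abs_of_nonneg (chiSqCDF_nonneg m hy)]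
  exact hanti (Nat.zero_le m)

lemma ncChiSqPDF_two_mul_succ (m : ℕ) (ξ y : ℝ) :
    ncChiSqPDF (2 * (m + 1)) ξ y = ∑' j, poissonWeight (ξ / 2) j * chiSqPDF (m + j) y := by
  refine tsum_congr fun j => ?_
  have hdof : ((2 * (m + 1) : ℕ) : ℝ) / 2 = m + 1 := by push_cast; ring
  rw [hdof, show (m : ℝ) + 1 + j - 1 = (m + j : ℕ) by push_cast; ring,
    show (m : ℝ) + 1 + j = (m + j : ℕ) + 1 by push_cast; ring, Real.Gamma_nat_eq_factorial,
    ← Nat.cast_succ, Real.rpow_natCast, Real.rpow_natCast, poissonWeight, chiSqPDF, neg_div]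

lemma integral_norm_poissonWeight_mul_chiSqPDF (r : ℝ) (j k : ℕ) {y : ℝ} (hy : 0 ≤ y) :
    ∫ t in Ioc 0 y, ‖poissonWeight r j * chiSqPDF k t‖ = |poissonWeight r j| * chiSqCDF k y := by
  rw [chiSqCDF, intervalIntegral.integral_of_le hy, ← integral_const_mul]
  refine setIntegral_congr_fun measurableSet_Ioc fun t ht => ?_
  rw [norm_mul, Real.norm_eq_abs, Real.norm_of_nonneg (chiSqPDF_nonneg k ht.1.le)]

lemma ncChiSqCDF_two_mul_succ (m : ℕ) (ξ : ℝ) {y : ℝ} (hy : 0 ≤ y) :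
    ncChiSqCDF (2 * (m + 1)) ξ y = ∑' j, poissonWeight (ξ / 2) j * chiSqCDF (m + j) y := by
  have hint (k : ℕ) : IntegrableOn (chiSqPDF k) (Ioc 0 y) :=
    (continuous_chiSqPDF k).integrableOn_Icc.mono_set Ioc_subset_Icc_self
  have hsum :
      Summable fun j => ∫ t in Ioc 0 y, ‖poissonWeight (ξ / 2) j * chiSqPDF (m + j) t‖ := by
    simp only [integral_norm_poissonWeight_mul_chiSqPDF _ _ _ hy]
    refine .of_norm_bounded ((summable_poissonWeight (ξ / 2)).abs.mul_right (chiSqCDF 0 y))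
      fun j => ?_
    rw [Real.norm_eq_abs, abs_mul, abs_abs]
    exact mul_le_mul_of_nonneg_left (abs_chiSqCDF_le _ hy) (abs_nonneg _)
  simp only [ncChiSqCDF, chiSqCDF, ncChiSqPDF_two_mul_succ, intervalIntegral.integral_of_le hy,
    ← integral_const_mul]
  exact (integral_tsum_of_summable_integral_norm (fun j => (hint (m + j)).const_mul _) hsum).symm

theorem hasDerivAt_ncChiSqCDF (m : ℕ) (ξ : ℝ) {y : ℝ} (hy : 0 ≤ y) :
    HasDerivAt (fun ξ => ncChiSqCDF (2 * (m + 1)) ξ y) (-ncChiSqPDF (2 * (m + 1 + 1)) ξ y) ξ := by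
  have h := (hasDerivAt_tsum_poissonWeight_mul (fun j => abs_chiSqCDF_le (m + j) hy) (ξ / 2)).comp
    ξ ((hasDerivAt_id ξ).div_const 2)
  refine (h.congr_of_eventuallyEq (.of_forall (ncChiSqCDF_two_mul_succ m · hy))).congr_deriv ?_
  rw [ncChiSqPDF_two_mul_succ, ← tsum_neg, ← tsum_mul_right]
  refine tsum_congr fun j => ?_
  rw [show m + (j + 1) = m + j + 1 by ring, ← neg_sub, chiSqCDF_sub_chiSqCDF_succ,
    show m + 1 + j = m + j + 1 by ring]
  ring

/-- The auxiliary density `f_Q(y; ρ+h, ρ)` converges pointwise, as `h → 0`,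
to the noncentral chi-squared density with `2(N+1)` degrees of freedom and noncentrality `ρ²`. -/
theorem stmt11 (N : ℕ) (hN : 1 ≤ N) (ρ : ℝ) (hρ : 0 < ρ) (y : ℝ) (hy : 0 < y) :
    Tendsto (fun h : ℝ =>
        (ncChiSqCDF (2*N) (ρ^2) y - ncChiSqCDF (2*N) ((ρ+h)^2) y) / (h * (2*ρ + h)))
      (nhdsWithin 0 {(0:ℝ)}ᶜ) (nhds (ncChiSqPDF (2*(N+1)) (ρ^2) y)) := by
  obtain ⟨m, rfl⟩ : ∃ m, N = m + 1 := ⟨N - 1, by omega⟩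
  have hsquare : HasDerivAt (fun h : ℝ => (ρ + h) ^ 2) (2 * ρ) 0 := by
    simpa using ((hasDerivAt_id' (0 : ℝ)).const_add ρ).fun_pow 2
  have hslope := hasDerivAt_iff_tendsto_slope_zero.mp
    ((hasDerivAt_ncChiSqCDF m (ρ ^ 2) hy.le).comp_of_eq 0 hsquare (by ring))
  have hinv : Tendsto (fun h : ℝ => -(2 * ρ + h)⁻¹) (𝓝[≠] 0) (𝓝 (-(2 * ρ)⁻¹)) := by
    have hcont : ContinuousAt (fun h : ℝ => -(2 * ρ + h)⁻¹) 0 :=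
      ((continuousAt_const.add continuousAt_id).inv₀ (by simp [hρ.ne'])).neg
    simpa using hcont.tendsto.mono_left nhdsWithin_le_nhds
  convert hslope.mul hinv using 1
  · funext h
    simp only [Function.comp_def, zero_add, add_zero, smul_eq_mul, div_eq_mul_inv, mul_inv]
    ring
  · congr 1
    field_simp

end
end
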